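/- arXiv:2105.00428 — 10 statements merged into one kernel-verified Lean document; each statement's English description precedes it below -/
import Mathlib

section
/- If B is a Rota–Baxter operator of weight 1 on a group G, i.e. B(g)B(h) = B(gB(g)hB(g)^{-1}) for all g,h ∈ G, then the operation g ∘ h = gB(g)hB(g)^{-1} makes (G, ∘) a group. -/
/-- If `B` is a Rota–Baxter operator of weight 1 on a group `G`, then the derived
operation `g ∘ h = g * B g * h * (B g)⁻¹` makes `G` into a group. -/
theorem stmt_0 {G : Type*} [Group G] (B : G → G)
    (hB : ∀ g h : G, B g * B h = B (g * B g * h * (B g)⁻¹)) :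
    (∀ a b c : G, (fun x y : G => x * B x * y * (B x)⁻¹) ((fun x y : G => x * B x * y * (B x)⁻¹) a b) c
        = (fun x y : G => x * B x * y * (B x)⁻¹) a ((fun x y : G => x * B x * y * (B x)⁻¹) b c)) ∧
    (∃ e : G, (∀ a : G, (fun x y : G => x * B x * y * (B x)⁻¹) e a = a ∧
        (fun x y : G => x * B x * y * (B x)⁻¹) a e = a) ∧
      (∀ a : G, ∃ b : G, (fun x y : G => x * B x * y * (B x)⁻¹) a b = e ∧
        (fun x y : G => x * B x * y * (B x)⁻¹) b a = e)) := by
  have hB1 : B 1 = 1 := by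
    have h := hB 1 1
    simp only [one_mul, mul_one] at h
    rw [mul_inv_cancel] at h
    exact mul_right_cancel (by rw [h, one_mul])
  refine ⟨?_, 1, ?_, ?_⟩
  · intro a b c
    simp only
    rw [← hB a b]
    group
  · intro a
    simp [hB1]
  · intro a
    refine ⟨(B a)⁻¹ * a⁻¹ * B a, ?_, ?_⟩
    · simp only
      group
    · have hBb : B ((B a)⁻¹ * a⁻¹ * B a) = (B a)⁻¹ := by
        have h := hB a ((B a)⁻¹ * a⁻¹ * B a)
        have harg : a * B a * ((B a)⁻¹ * a⁻¹ * B a) * (B a)⁻¹ = 1 := by group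
        rw [harg, hB1] at h
        exact eq_inv_of_mul_eq_one_right h
      simp only [hBb]
      group
end

section
/- If B is a Rota–Baxter operator of weight 1 on a group G, then the map B̃ defined by B̃(g) = g^{-1}B(g^{-1}) is also a Rota–Baxter operator of weight 1 on G. -/
/-- If `B` is a Rota–Baxter operator of weight 1 on a group `G`, then so is
`B̃` defined by `B̃ g = g⁻¹ * B g⁻¹`. -/
theorem stmt_3 {G : Type*} [Group G] (B : G → G)
    (hB : ∀ g h : G, B g * B h = B (g * B g * h * (B g)⁻¹)) :
    ∀ g h : G,
      (fun x : G => x⁻¹ * B x⁻¹) g * (fun x : G => x⁻¹ * B x⁻¹) h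
        = (fun x : G => x⁻¹ * B x⁻¹)
            (g * (fun x : G => x⁻¹ * B x⁻¹) g * h * ((fun x : G => x⁻¹ * B x⁻¹) g)⁻¹) := by
  intro g h
  have key := hB g⁻¹ h⁻¹
  simp only
  have h1 : g * (g⁻¹ * B g⁻¹) * h * (g⁻¹ * B g⁻¹)⁻¹ = B g⁻¹ * h * (B g⁻¹)⁻¹ * g := by group
  rw [h1]
  have h2 : (B g⁻¹ * h * (B g⁻¹)⁻¹ * g)⁻¹ = g⁻¹ * B g⁻¹ * h⁻¹ * (B g⁻¹)⁻¹ := by group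
  rw [h2, ← key]
  group
end

section
/- Let G be a group with an exact factorization G = HL, where H, L are subgroups with H ∩ L = {e} and every element of G is uniquely a product hl with h ∈ H, l ∈ L. Then the map B: G → G defined by B(hl) = l^{-1} is a Rota–Baxter operator of weight 1 on G. -/
/-- Given an exact factorization `G = H L` (every element of `G` is uniquely a product
`h * l` with `h ∈ H`, `l ∈ L`, and `H ∩ L = {e}`), the map `B` with `B (h * l) = l⁻¹`
is a Rota–Baxter operator of weight 1 on `G`. -/
theorem stmt_5 {G : Type*} [Group G] (H L : Subgroup G)
    (hdisj : H ⊓ L = ⊥)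
    (hfact : ∀ g : G, ∃! p : H × L, (p.1 : G) * (p.2 : G) = g)
    (B : G → G) (hB : ∀ (h : H) (l : L), B ((h : G) * (l : G)) = (l : G)⁻¹) :
    ∀ g h : G, B g * B h = B (g * B g * h * (B g)⁻¹) := by
  intro g h
  obtain ⟨⟨h1, l1⟩, hp, -⟩ := hfact g
  obtain ⟨⟨h2, l2⟩, hq, -⟩ := hfact h
  simp only at hp hq
  subst hp hq
  rw [hB, hB]
  have key : (h1 : G) * l1 * (l1 : G)⁻¹ * ((h2 : G) * l2) * ((l1 : G)⁻¹)⁻¹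
      = ((h1 * h2 : H) : G) * ((l2 * l1 : L) : G) := by
    push_cast; group
  rw [key, hB]
  push_cast; group
end

section
/- Let (G, ·) be a group and B: G → G a Rota–Baxter operator of weight 1. Define x ∘ y = xB(x)yB(x)^{-1}. Then (G, ·, ∘) is a skew left brace, i.e. (G, ∘) is a group and a ∘ (b·c) = (a ∘ b) · a^{-1} · (a ∘ c) holds for all a,b,c ∈ G. -/
/-- If `B` is a Rota–Baxter operator of weight 1 on `(G, ·)` and `x ∘ y = x * B x * y * (B x)⁻¹`,
then `(G, ·, ∘)` is a skew left brace: `(G, ∘)` is a group and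
`a ∘ (b * c) = (a ∘ b) * a⁻¹ * (a ∘ c)` for all `a b c`. -/
theorem stmt_6 {G : Type*} [Group G] (B : G → G)
    (hB : ∀ g h : G, B g * B h = B (g * B g * h * (B g)⁻¹)) :
    (∀ a b c : G, (fun x y : G => x * B x * y * (B x)⁻¹) ((fun x y : G => x * B x * y * (B x)⁻¹) a b) c
        = (fun x y : G => x * B x * y * (B x)⁻¹) a ((fun x y : G => x * B x * y * (B x)⁻¹) b c)) ∧
    (∃ e : G, (∀ a : G, (fun x y : G => x * B x * y * (B x)⁻¹) e a = a ∧
        (fun x y : G => x * B x * y * (B x)⁻¹) a e = a) ∧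
      (∀ a : G, ∃ b : G, (fun x y : G => x * B x * y * (B x)⁻¹) a b = e ∧
        (fun x y : G => x * B x * y * (B x)⁻¹) b a = e)) ∧
    (∀ a b c : G, (fun x y : G => x * B x * y * (B x)⁻¹) a (b * c)
        = (fun x y : G => x * B x * y * (B x)⁻¹) a b * a⁻¹ * (fun x y : G => x * B x * y * (B x)⁻¹) a c) := by
  have hB1 : B 1 = 1 := by
    have h := hB 1 1
    rw [show (1:G) * B 1 * 1 * (B 1)⁻¹ = 1 by group] at h
    exact mul_eq_left.mp h
  refine ⟨?_, ⟨1, ?_, ?_⟩, ?_⟩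
  · intro a b c
    simp only
    rw [← hB a b]
    group
  · intro a
    simp only [hB1]
    constructor <;> group
  · intro a
    refine ⟨(B a)⁻¹ * a⁻¹ * B a, ?_, ?_⟩
    · simp only; group
    · have harg : a * B a * ((B a)⁻¹ * a⁻¹ * B a) * (B a)⁻¹ = 1 := by group
      have hb : B ((B a)⁻¹ * a⁻¹ * B a) = (B a)⁻¹ := by
        have h := hB a ((B a)⁻¹ * a⁻¹ * B a)
        rw [harg, hB1] at h
        exact eq_inv_of_mul_eq_one_right h
      simp only [hb]
      group
  · intro a b c
    simp only
    group
end

section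
/- Let (G, ·) be a group and C: G → G a Rota–Baxter operator of weight −1, i.e. C(g)C(h) = C(C(g)hC(g)^{-1}g) for all g,h. Define x ∘ y = C(x)yC(x)^{-1}x. Then (G, ·, ∘) is a skew left brace. Moreover, if (G, ·) is abelian then this skew left brace is trivial. -/
/-- If `C` is a Rota–Baxter operator of weight −1 on `(G, ·)` and
`x ∘ y = C x * y * (C x)⁻¹ * x`, then `(G, ·, ∘)` is a skew left brace; moreover, if
`(G, ·)` is abelian then this skew left brace is trivial. -/
theorem stmt_8 {G : Type*} [Group G] (C : G → G)
    (hC : ∀ g h : G, C g * C h = C (C g * h * (C g)⁻¹ * g)) :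
    (∀ a b c : G, (fun x y : G => C x * y * (C x)⁻¹ * x) ((fun x y : G => C x * y * (C x)⁻¹ * x) a b) c
        = (fun x y : G => C x * y * (C x)⁻¹ * x) a ((fun x y : G => C x * y * (C x)⁻¹ * x) b c)) ∧
    (∃ e : G, (∀ a : G, (fun x y : G => C x * y * (C x)⁻¹ * x) e a = a ∧
        (fun x y : G => C x * y * (C x)⁻¹ * x) a e = a) ∧
      (∀ a : G, ∃ b : G, (fun x y : G => C x * y * (C x)⁻¹ * x) a b = e ∧
        (fun x y : G => C x * y * (C x)⁻¹ * x) b a = e)) ∧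
    (∀ a b c : G, (fun x y : G => C x * y * (C x)⁻¹ * x) a (b * c)
        = (fun x y : G => C x * y * (C x)⁻¹ * x) a b * a⁻¹ * (fun x y : G => C x * y * (C x)⁻¹ * x) a c) ∧
    ((∀ a b : G, a * b = b * a) → ∀ x y : G, C x * y * (C x)⁻¹ * x = x * y) := by
  -- C 1 = 1
  have h1 : C 1 = 1 := by
    have := hC 1 1
    simp only [mul_one, mul_inv_cancel_right, mul_inv_cancel] at this
    exact mul_eq_left.mp this
  -- C (a ∘ b) = C a * C b
  have hmul : ∀ a b : G, C (C a * b * (C a)⁻¹ * a) = C a * C b := fun a b => (hC a b).symm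
  refine ⟨?_, ⟨1, ?_, ?_⟩, ?_, ?_⟩
  · intro a b c
    simp only []
    rw [hmul]
    group
  · intro a
    simp only [h1]
    constructor <;> group
  · intro a
    refine ⟨(C a)⁻¹ * a⁻¹ * C a, ?_, ?_⟩
    · simp only []
      group
    · have hb : C ((C a)⁻¹ * a⁻¹ * C a) = (C a)⁻¹ := by
        have := hmul a ((C a)⁻¹ * a⁻¹ * C a)
        have h2 : C a * ((C a)⁻¹ * a⁻¹ * C a) * (C a)⁻¹ * a = 1 := by group
        rw [h2, h1] at this
        exact eq_inv_of_mul_eq_one_right this.symm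
      simp only [hb]
      group
  · intro a b c
    simp only []
    group
  · intro hab x y
    rw [hab (C x * y * (C x)⁻¹) x, hab (C x) y]
    group
end

section
/- Every skew left brace (G, ·, ∘) embeds into a Rota–Baxter group: the semidirect product G̃ = G ⋉ G with product (x,y)*(z,t) = (x ∘ z, y·λ_x(t)), where λ_x(t) = x^{-1}·(x ∘ t), admits a Rota–Baxter operator B of weight 1 with B((x,y)) = (x^{∘(-1)} ∘ y, e), and the map ψ: g ↦ (e,g) is an injective skew left brace homomorphism from G to the skew left brace induced by B on G̃. -/
/-- Every skew left brace `(G, ·, ∘)` embeds into a Rota–Baxter group: on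
`G̃ = G ⋉ G` with product `(x,y) * (z,t) = (x ∘ z, y · λ_x(t))`, where
`λ_x(t) = x⁻¹ · (x ∘ t)`, the map `B (x,y) = (x^{∘(-1)} ∘ y, 1)` is a Rota–Baxter
operator of weight 1, and `ψ : g ↦ (1, g)` is an injective homomorphism of skew left
braces from `G` into the skew left brace induced by `B` on `G̃`. -/
theorem stmt_10 {G : Type*} [Group G]
    (o : G → G → G) (oi : G → G) (oe : G)
    (hassoc : ∀ a b c : G, o (o a b) c = o a (o b c))
    (hid : ∀ a : G, o oe a = a ∧ o a oe = a)
    (hinv : ∀ a : G, o a (oi a) = oe ∧ o (oi a) a = oe)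
    (hbrace : ∀ a b c : G, o a (b * c) = o a b * a⁻¹ * o a c) :
    ∃ (tinv : G × G → G × G) (te : G × G),
      (∀ a b c : G × G,
        (fun p q : G × G => (o p.1 q.1, p.2 * (p.1⁻¹ * o p.1 q.2)))
          ((fun p q : G × G => (o p.1 q.1, p.2 * (p.1⁻¹ * o p.1 q.2))) a b) c
        = (fun p q : G × G => (o p.1 q.1, p.2 * (p.1⁻¹ * o p.1 q.2))) a
            ((fun p q : G × G => (o p.1 q.1, p.2 * (p.1⁻¹ * o p.1 q.2))) b c)) ∧
      (∀ a : G × G,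
        (fun p q : G × G => (o p.1 q.1, p.2 * (p.1⁻¹ * o p.1 q.2))) te a = a ∧
        (fun p q : G × G => (o p.1 q.1, p.2 * (p.1⁻¹ * o p.1 q.2))) a te = a) ∧
      (∀ a : G × G,
        (fun p q : G × G => (o p.1 q.1, p.2 * (p.1⁻¹ * o p.1 q.2))) a (tinv a) = te ∧
        (fun p q : G × G => (o p.1 q.1, p.2 * (p.1⁻¹ * o p.1 q.2))) (tinv a) a = te) ∧
      -- B is a Rota–Baxter operator of weight 1 on G̃
      (∀ p q : G × G,
        (fun p q : G × G => (o p.1 q.1, p.2 * (p.1⁻¹ * o p.1 q.2)))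
          ((fun p : G × G => ((o (oi p.1) p.2, (1 : G)) : G × G)) p)
          ((fun p : G × G => ((o (oi p.1) p.2, (1 : G)) : G × G)) q)
        = (fun p : G × G => ((o (oi p.1) p.2, (1 : G)) : G × G))
            ((fun p q : G × G => (o p.1 q.1, p.2 * (p.1⁻¹ * o p.1 q.2)))
              ((fun p q : G × G => (o p.1 q.1, p.2 * (p.1⁻¹ * o p.1 q.2)))
                ((fun p q : G × G => (o p.1 q.1, p.2 * (p.1⁻¹ * o p.1 q.2))) p
                  ((fun p : G × G => ((o (oi p.1) p.2, (1 : G)) : G × G)) p)) q)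
              (tinv ((fun p : G × G => ((o (oi p.1) p.2, (1 : G)) : G × G)) p)))) ∧
      -- ψ : g ↦ (1, g) is injective
      Function.Injective (fun g : G => ((1, g) : G × G)) ∧
      -- ψ respects the additive (·) operations
      (∀ g h : G, ((1, g * h) : G × G)
        = (fun p q : G × G => (o p.1 q.1, p.2 * (p.1⁻¹ * o p.1 q.2))) (1, g) (1, h)) ∧
      -- ψ sends ∘ to the circle product ∘_B induced by B on G̃
      (∀ g h : G, ((1, o g h) : G × G)
        = (fun p q : G × G => (o p.1 q.1, p.2 * (p.1⁻¹ * o p.1 q.2)))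
            ((fun p q : G × G => (o p.1 q.1, p.2 * (p.1⁻¹ * o p.1 q.2)))
              ((fun p q : G × G => (o p.1 q.1, p.2 * (p.1⁻¹ * o p.1 q.2))) (1, g)
                ((fun p : G × G => ((o (oi p.1) p.2, (1 : G)) : G × G)) (1, g))) (1, h))
            (tinv ((fun p : G × G => ((o (oi p.1) p.2, (1 : G)) : G × G)) (1, g)))) := by

  -- basic consequences of the brace axioms
  have h1 : ∀ a : G, o a 1 = a := by
    intro a
    have h := hbrace a oe 1
    rw [mul_one, (hid a).2] at h
    rw [mul_inv_cancel, one_mul] at h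
    exact h.symm
  have hoe : oe = 1 := (h1 oe).symm.trans (hid 1).1
  have ho1 : ∀ t : G, o 1 t = t := fun t => by rw [← hoe]; exact (hid t).1
  have hi1 : oi 1 = 1 := by
    have h := (hinv 1).1
    rwa [ho1, hoe] at h
  have hs1 : ∀ a : G, a⁻¹ * o a 1 = 1 := fun a => by rw [h1, inv_mul_cancel]
  have hlmul : ∀ a t s : G, a⁻¹ * o a (t * s) = (a⁻¹ * o a t) * (a⁻¹ * o a s) := by
    intro a t s
    rw [hbrace]
    group
  have hlcomp : ∀ a b t : G,
      (o a b)⁻¹ * o (o a b) t = a⁻¹ * o a (b⁻¹ * o b t) := by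
    intro a b t
    have h := hbrace a b (b⁻¹ * o b t)
    rw [mul_inv_cancel_left, ← hassoc] at h
    rw [h]
    group
  have hxu : ∀ x y : G, o x (o (oi x) y) = y := by
    intro x y
    rw [← hassoc, (hinv x).1, hoe, ho1]
  have hux : ∀ x y : G, o (oi x) (o x y) = y := by
    intro x y
    rw [← hassoc, (hinv x).2, hoe, ho1]
  have hcan : ∀ w x c : G, o w x = c → x = o (oi w) c := by
    intro w x c h
    subst h
    rw [← hassoc, (hinv w).2, hoe, ho1]
  refine ⟨fun p => (oi p.1, (oi p.1)⁻¹ * o (oi p.1) p.2⁻¹), (1, 1),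
    ?_, ?_, ?_, ?_, ?_, ?_, ?_⟩
  · -- associativity
    intro a b c
    simp only [Prod.mk.injEq]
    refine ⟨hassoc _ _ _, ?_⟩
    rw [hlmul, ← hlcomp, mul_assoc]
  · -- identity
    intro a
    obtain ⟨x, y⟩ := a
    constructor
    · simp only [Prod.mk.injEq]
      exact ⟨ho1 x, by rw [ho1]; group⟩
    · simp only [Prod.mk.injEq]
      exact ⟨h1 x, by rw [hs1, mul_one]⟩
  · -- inverses
    intro a
    constructor
    · simp only [Prod.mk.injEq]
      refine ⟨by rw [(hinv a.1).1, hoe], ?_⟩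
      rw [← hlcomp, (hinv a.1).1, hoe, ho1]
      group
    · simp only [Prod.mk.injEq]
      refine ⟨by rw [(hinv a.1).2, hoe], ?_⟩
      rw [← hlmul, inv_mul_cancel, hs1]
  · -- Rota-Baxter identity
    intro p q
    simp only [Prod.mk.injEq, hs1, mul_one, one_mul, inv_one, hxu, mul_inv_cancel_left]
    refine ⟨?_, trivial⟩
    apply hcan
    rw [hassoc, hux, hassoc, hxu]
  · -- injectivity of ψ
    intro a b h
    simpa using congrArg Prod.snd h
  · -- ψ respects the group operation
    intro g h
    simp [ho1]
  · -- ψ respects the circle operation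
    intro g h
    simp [hi1, ho1, h1, hs1, (hinv g).1, hoe, mul_inv_cancel_left]
end

section
/- Let (G, ·, ∘) be a skew left brace such that (G, ∘) is abelian. Then (G, ·) is metabelian. -/
section Ito
variable {H : Type*} [Group H]

/-- Conjugating a mixed commutator by an element of `A`. -/
lemma ito_R1 (a b a' b' a'' : H) (h1 : a' * a = a * a') (h2 : a'' * a = a * a'')
    (hd : a' * b * a'⁻¹ = b' * a'') :
    a' * (a * b * a⁻¹ * b⁻¹) * a'⁻¹ = a * b' * a⁻¹ * b'⁻¹ := by
  have ha : a' * a * a'⁻¹ = a := by rw [h1]; group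
  have hbinv : a' * b⁻¹ * a'⁻¹ = a''⁻¹ * b'⁻¹ := by
    have : a' * b⁻¹ * a'⁻¹ = (a' * b * a'⁻¹)⁻¹ := by group
    rw [this, hd, mul_inv_rev]
  have hainv : a'' * a⁻¹ = a⁻¹ * a'' := by
    have : Commute a'' a := h2
    exact (this.inv_right).eq
  calc a' * (a * b * a⁻¹ * b⁻¹) * a'⁻¹
      = (a' * a * a'⁻¹) * (a' * b * a'⁻¹) * (a' * a * a'⁻¹)⁻¹ * (a' * b⁻¹ * a'⁻¹) := by group
    _ = a * (b' * a'') * a⁻¹ * (a''⁻¹ * b'⁻¹) := by rw [ha, hd, hbinv]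
    _ = a * b' * (a'' * a⁻¹) * a''⁻¹ * b'⁻¹ := by group
    _ = a * b' * (a⁻¹ * a'') * a''⁻¹ * b'⁻¹ := by rw [hainv]
    _ = a * b' * a⁻¹ * b'⁻¹ := by group

/-- Conjugating a mixed commutator by an element of `B`. -/
lemma ito_R2 (a b b' a' b'' : H) (h1 : b' * b = b * b') (h2 : b'' * b = b * b'')
    (hd : b' * a * b'⁻¹ = a' * b'') :
    b' * (a * b * a⁻¹ * b⁻¹) * b'⁻¹ = a' * b * a'⁻¹ * b⁻¹ := by
  have hb : b' * b * b'⁻¹ = b := by rw [h1]; group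
  have hainv : b' * a⁻¹ * b'⁻¹ = b''⁻¹ * a'⁻¹ := by
    have : b' * a⁻¹ * b'⁻¹ = (b' * a * b'⁻¹)⁻¹ := by group
    rw [this, hd, mul_inv_rev]
  have hbinv : b'' * b = b * b'' := h2
  calc b' * (a * b * a⁻¹ * b⁻¹) * b'⁻¹
      = (b' * a * b'⁻¹) * (b' * b * b'⁻¹) * (b' * a⁻¹ * b'⁻¹) * (b' * b * b'⁻¹)⁻¹ := by group
    _ = (a' * b'') * b * (b''⁻¹ * a'⁻¹) * b⁻¹ := by rw [hb, hd, hainv]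
    _ = a' * (b'' * b) * b''⁻¹ * a'⁻¹ * b⁻¹ := by group
    _ = a' * (b * b'') * b''⁻¹ * a'⁻¹ * b⁻¹ := by rw [hbinv]
    _ = a' * b * a'⁻¹ * b⁻¹ := by group

variable (PA PB : H → Prop)
variable (hAinv : ∀ a, PA a → PA a⁻¹) (hBinv : ∀ b, PB b → PB b⁻¹)
variable (hAcomm : ∀ a a', PA a → PA a' → a * a' = a' * a)
variable (hBcomm : ∀ b b', PB b → PB b' → b * b' = b' * b)
variable (hdec : ∀ h : H, ∃ a b, PA a ∧ PB b ∧ h = a * b)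

include hAinv hBinv hAcomm hBcomm hdec

lemma ito_dec' : ∀ h : H, ∃ b a, PB b ∧ PA a ∧ h = b * a := by
  intro h
  obtain ⟨a, b, ha, hb, he⟩ := hdec h⁻¹
  exact ⟨b⁻¹, a⁻¹, hBinv b hb, hAinv a ha, by rw [← mul_inv_rev, ← he, inv_inv]⟩

/-- Generators of `[A,B]` pairwise commute. -/
lemma ito_gen_comm (a b c d : H) (ha : PA a) (hb : PB b) (hc : PA c) (hd : PB d) :
    (c * d * c⁻¹ * d⁻¹) * (a * b * a⁻¹ * b⁻¹) = (a * b * a⁻¹ * b⁻¹) * (c * d * c⁻¹ * d⁻¹) := by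
  -- conjugate x = [a,b] by [c,d] in four steps
  obtain ⟨a₁, b₁, ha₁, hb₁, h₁⟩ := hdec (d⁻¹ * a * d)
  obtain ⟨b₂, a₂, hb₂, ha₂, h₂⟩ := ito_dec' PA PB hAinv hBinv hAcomm hBcomm hdec (c⁻¹ * b * c)
  have step1 : d⁻¹ * (a * b * a⁻¹ * b⁻¹) * d⁻¹⁻¹ = a₁ * b * a₁⁻¹ * b⁻¹ := by
    refine ito_R2 a b d⁻¹ a₁ b₁ ?_ ?_ ?_
    · exact hBcomm d⁻¹ b (hBinv d hd) hb
    · exact hBcomm b₁ b hb₁ hb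
    · rw [inv_inv]; exact h₁
  have step2 : c⁻¹ * (a₁ * b * a₁⁻¹ * b⁻¹) * c⁻¹⁻¹ = a₁ * b₂ * a₁⁻¹ * b₂⁻¹ := by
    refine ito_R1 a₁ b c⁻¹ b₂ a₂ ?_ ?_ ?_
    · exact hAcomm c⁻¹ a₁ (hAinv c hc) ha₁
    · exact hAcomm a₂ a₁ ha₂ ha₁
    · rw [inv_inv]; exact h₂
  have key3 : d * a₁ * d⁻¹ = a * b₁⁻¹ := by
    have e1 : a₁ = d⁻¹ * a * d * b₁⁻¹ := by rw [h₁]; group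
    have e2 : d * b₁⁻¹ * d⁻¹ = b₁⁻¹ := by
      have : Commute d b₁ := hBcomm d b₁ hd hb₁
      rw [this.inv_right.eq]; group
    calc d * a₁ * d⁻¹ = a * (d * b₁⁻¹ * d⁻¹) := by rw [e1]; group
      _ = a * b₁⁻¹ := by rw [e2]
  have step3 : d * (a₁ * b₂ * a₁⁻¹ * b₂⁻¹) * d⁻¹ = a * b₂ * a⁻¹ * b₂⁻¹ := by
    refine ito_R2 a₁ b₂ d a b₁⁻¹ ?_ ?_ key3
    · exact hBcomm d b₂ hd hb₂
    · exact hBcomm b₁⁻¹ b₂ (hBinv b₁ hb₁) hb₂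
  have key4 : c * b₂ * c⁻¹ = b * a₂⁻¹ := by
    have e1 : b₂ = c⁻¹ * b * c * a₂⁻¹ := by rw [h₂]; group
    have e2 : c * a₂⁻¹ * c⁻¹ = a₂⁻¹ := by
      have : Commute c a₂ := hAcomm c a₂ hc ha₂
      rw [this.inv_right.eq]; group
    calc c * b₂ * c⁻¹ = b * (c * a₂⁻¹ * c⁻¹) := by rw [e1]; group
      _ = b * a₂⁻¹ := by rw [e2]
  have step4 : c * (a * b₂ * a⁻¹ * b₂⁻¹) * c⁻¹ = a * b * a⁻¹ * b⁻¹ := by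
    refine ito_R1 a b₂ c b a₂⁻¹ ?_ ?_ key4
    · exact hAcomm c a hc ha
    · exact hAcomm a₂⁻¹ a (hAinv a₂ ha₂) ha
  have main : (c * d * c⁻¹ * d⁻¹) * (a * b * a⁻¹ * b⁻¹) * (c * d * c⁻¹ * d⁻¹)⁻¹
      = a * b * a⁻¹ * b⁻¹ := by
    have expand : (c * d * c⁻¹ * d⁻¹) * (a * b * a⁻¹ * b⁻¹) * (c * d * c⁻¹ * d⁻¹)⁻¹
        = c * (d * (c⁻¹ * (d⁻¹ * (a * b * a⁻¹ * b⁻¹) * d⁻¹⁻¹) * c⁻¹⁻¹) * d⁻¹) * c⁻¹ := by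
      group
    rw [expand, step1, step2, step3, step4]
  calc (c * d * c⁻¹ * d⁻¹) * (a * b * a⁻¹ * b⁻¹)
      = ((c * d * c⁻¹ * d⁻¹) * (a * b * a⁻¹ * b⁻¹) * (c * d * c⁻¹ * d⁻¹)⁻¹) * (c * d * c⁻¹ * d⁻¹) := by group
    _ = (a * b * a⁻¹ * b⁻¹) * (c * d * c⁻¹ * d⁻¹) := by rw [main]

/-- Every commutator is `s⁻¹ * t` with `s, t` mixed commutators. -/
lemma ito_comm_decomp (g h : H) :
    ∃ s t : H,
      (∃ a b, PA a ∧ PB b ∧ s = a * b * a⁻¹ * b⁻¹) ∧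
      (∃ a b, PA a ∧ PB b ∧ t = a * b * a⁻¹ * b⁻¹) ∧
      g * h * g⁻¹ * h⁻¹ = s⁻¹ * t := by
  obtain ⟨a, b, ha, hb, hg⟩ := hdec g
  obtain ⟨c, d, hc, hd, hh⟩ := hdec h
  -- decompositions for the two conjugations
  obtain ⟨b', a'', hb', ha'', hba⟩ := ito_dec' PA PB hAinv hBinv hAcomm hBcomm hdec (a * b * a⁻¹)
  obtain ⟨d', c'', hd', hc'', hdc⟩ := ito_dec' PA PB hAinv hBinv hAcomm hBcomm hdec (c * d * c⁻¹)
  have s_def : a * (c * b * c⁻¹ * b⁻¹) * a⁻¹ = c * b' * c⁻¹ * b'⁻¹ :=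
    ito_R1 c b a b' a'' (hAcomm a c ha hc) (hAcomm a'' c ha'' hc) hba
  have t_def : c * (a * d * a⁻¹ * d⁻¹) * c⁻¹ = a * d' * a⁻¹ * d'⁻¹ :=
    ito_R1 a d c d' c'' (hAcomm c a hc ha) (hAcomm c'' a hc'' ha) hdc
  refine ⟨c * b' * c⁻¹ * b'⁻¹, a * d' * a⁻¹ * d'⁻¹,
    ⟨c, b', hc, hb', rfl⟩, ⟨a, d', ha, hd', rfl⟩, ?_⟩
  rw [← s_def, ← t_def]
  have claim : (a * b) * (c * d) * (a * b)⁻¹ * (c * d)⁻¹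
      = (a * (b * c * b⁻¹ * c⁻¹) * a⁻¹) * (c * (a * d * a⁻¹ * d⁻¹) * c⁻¹) := by
    have hbd : d * b⁻¹ = b⁻¹ * d := by
      have : Commute d b := hBcomm d b hd hb
      exact this.inv_right.eq
    have hac : c⁻¹ * a⁻¹ * c * a = 1 := by
      have : a * c = c * a := hAcomm a c ha hc
      rw [show c⁻¹ * a⁻¹ * c * a = c⁻¹ * a⁻¹ * (c * a) by group, ← this]; group
    calc (a * b) * (c * d) * (a * b)⁻¹ * (c * d)⁻¹
        = a * b * c * (d * b⁻¹) * a⁻¹ * d⁻¹ * c⁻¹ := by group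
      _ = a * b * c * (b⁻¹ * d) * a⁻¹ * d⁻¹ * c⁻¹ := by rw [hbd]
      _ = a * b * c * b⁻¹ * 1 * (d * a⁻¹ * d⁻¹ * c⁻¹) := by group
      _ = a * b * c * b⁻¹ * (c⁻¹ * a⁻¹ * c * a) * (d * a⁻¹ * d⁻¹ * c⁻¹) := by rw [hac]
      _ = (a * (b * c * b⁻¹ * c⁻¹) * a⁻¹) * (c * (a * d * a⁻¹ * d⁻¹) * c⁻¹) := by group
  rw [hg, hh, claim]
  have : a * (b * c * b⁻¹ * c⁻¹) * a⁻¹ = (a * (c * b * c⁻¹ * b⁻¹) * a⁻¹)⁻¹ := by group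
  rw [this]

/-- Itô: commutators pairwise commute when `H = A·B` with `A, B` abelian. -/
theorem ito_main : ∀ g h g' h' : H,
    (g * h * g⁻¹ * h⁻¹) * (g' * h' * g'⁻¹ * h'⁻¹)
    = (g' * h' * g'⁻¹ * h'⁻¹) * (g * h * g⁻¹ * h⁻¹) := by
  intro g h g' h'
  obtain ⟨s₁, t₁, hs₁, ht₁, e₁⟩ := ito_comm_decomp PA PB hAinv hBinv hAcomm hBcomm hdec g h
  obtain ⟨s₂, t₂, hs₂, ht₂, e₂⟩ := ito_comm_decomp PA PB hAinv hBinv hAcomm hBcomm hdec g' h'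
  have gcomm : ∀ u v : H, (∃ a b, PA a ∧ PB b ∧ u = a * b * a⁻¹ * b⁻¹) →
      (∃ a b, PA a ∧ PB b ∧ v = a * b * a⁻¹ * b⁻¹) → Commute u v := by
    rintro u v ⟨a, b, ha, hb, rfl⟩ ⟨c, d, hc, hd, rfl⟩
    exact (ito_gen_comm PA PB hAinv hBinv hAcomm hBcomm hdec c d a b hc hd ha hb)
  have c11 : Commute s₁ s₂ := gcomm _ _ hs₁ hs₂
  have c12 : Commute s₁ t₂ := gcomm _ _ hs₁ ht₂
  have c21 : Commute t₁ s₂ := gcomm _ _ ht₁ hs₂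
  have c22 : Commute t₁ t₂ := gcomm _ _ ht₁ ht₂
  have : Commute (s₁⁻¹ * t₁) (s₂⁻¹ * t₂) :=
    Commute.mul_left (Commute.mul_right c11.inv_left.inv_right c12.inv_left)
      (Commute.mul_right c21.inv_right c22)
  rw [e₁, e₂]
  exact this.eq

end Ito

/-- Carrier for the "holomorph-like" group `Γ = G ⋊_λ (G,∘)` used in the proof. -/
structure ItoGam (G : Type*) where
  x : G
  a : G

theorem brace_master {G : Type*} [Group G] (o : G → G → G) (oi : G → G) (e : G)
    (hassoc : ∀ a b c, o (o a b) c = o a (o b c))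
    (he : ∀ a, o e a = a)
    (hinvl : ∀ a, o (oi a) a = e)
    (hbrace : ∀ a b c, o a (b * c) = o a b * a⁻¹ * o a c)
    (hcomm : ∀ a b, o a b = o b a) :
    ∀ w x y z : G,
      (w * x * w⁻¹ * x⁻¹) * (y * z * y⁻¹ * z⁻¹)
      = (y * z * y⁻¹ * z⁻¹) * (w * x * w⁻¹ * x⁻¹) := by
  -- right identity for `o`, from the brace axiom
  have d1 : ∀ a, o a 1 = a := by
    intro a
    have h := hbrace a 1 1
    rw [one_mul] at h
    have h2 : o a 1 * 1 = o a 1 * (a⁻¹ * o a 1) := by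
      rw [mul_one]; rw [← mul_assoc]; exact h
    have h3 := mul_left_cancel h2
    have : a * 1 = a * (a⁻¹ * o a 1) := by rw [← h3]
    rw [mul_one, ← mul_assoc, mul_inv_cancel, one_mul] at this
    exact this.symm
  have d2 : e = 1 := by
    have := he 1          -- o e 1 = 1
    rw [d1 e] at this     -- e = 1
    exact this
  have he' : ∀ a, o 1 a = a := by intro a; rw [← d2]; exact he a
  have hinvl' : ∀ a, o (oi a) a = 1 := by intro a; rw [hinvl, d2]
  have hinvr : ∀ a, o a (oi a) = 1 := by
    intro a
    calc o a (oi a) = o 1 (o a (oi a)) := (he' _).symm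
      _ = o (o (oi (oi a)) (oi a)) (o a (oi a)) := by rw [hinvl']
      _ = o (oi (oi a)) (o (o (oi a) a) (oi a)) := by rw [hassoc, ← hassoc (oi a)]
      _ = o (oi (oi a)) (o 1 (oi a)) := by rw [hinvl']
      _ = o (oi (oi a)) (oi a) := by rw [he']
      _ = 1 := hinvl' _
  -- the lambda maps
  set lam : G → G → G := fun a b => a⁻¹ * o a b with lam_def
  have o_lam : ∀ a b, o a b = a * lam a b := by
    intro a b; rw [lam_def]; simp [mul_assoc]
  have lam_mul : ∀ a b c, lam a (b * c) = lam a b * lam a c := by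
    intro a b c; simp only [lam_def, hbrace]; group
  have lam_one : ∀ a, lam a 1 = 1 := by
    intro a; simp only [lam_def, d1]; group
  have lam_one' : ∀ b, lam 1 b = b := by
    intro b; simp only [lam_def, he']; group
  have lam_inv : ∀ a b, lam a b⁻¹ = (lam a b)⁻¹ := by
    intro a b
    have h := lam_mul a b b⁻¹
    rw [mul_inv_cancel, lam_one] at h
    exact eq_inv_of_mul_eq_one_right h.symm
  have lam_comp : ∀ a b c, lam a (lam b c) = lam (o a b) c := by
    intro a b c
    have : lam a (lam b c) = lam a b⁻¹ * lam a (o b c) := by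
      rw [← lam_mul]
    rw [this, lam_inv]
    simp only [lam_def]
    rw [hassoc]
    group
  have oi_one : oi 1 = 1 := by
    have h1 := hinvl' 1   -- o (oi 1) 1 = 1
    rw [d1] at h1
    exact h1
  have lam_oi_inv : ∀ a, lam (oi a) a⁻¹ = oi a := by
    intro a
    have h1 : lam (oi a) a = (oi a)⁻¹ := by
      simp only [lam_def, hinvl']; group
    rw [lam_inv, h1, inv_inv]
  -- the group Γ
  letI : Group (ItoGam G) :=
    { mul := fun p q => ⟨p.x * lam p.a q.x, o p.a q.a⟩
      one := ⟨1, 1⟩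
      inv := fun p => ⟨lam (oi p.a) p.x⁻¹, oi p.a⟩
      mul_assoc := by
        rintro ⟨px, pa⟩ ⟨qx, qa⟩ ⟨rx, ra⟩
        show (⟨px * lam pa qx * lam (o pa qa) rx, o (o pa qa) ra⟩ : ItoGam G)
          = ⟨px * lam pa (qx * lam qa rx), o pa (o qa ra)⟩
        rw [lam_mul, lam_comp, hassoc, mul_assoc]
      one_mul := by
        rintro ⟨px, pa⟩
        show (⟨1 * lam 1 px, o 1 pa⟩ : ItoGam G) = ⟨px, pa⟩
        rw [lam_one', he', one_mul]
      mul_one := by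
        rintro ⟨px, pa⟩
        show (⟨px * lam pa 1, o pa 1⟩ : ItoGam G) = ⟨px, pa⟩
        rw [lam_one, d1, mul_one]
      inv_mul_cancel := by
        rintro ⟨px, pa⟩
        show (⟨lam (oi pa) px⁻¹ * lam (oi pa) px, o (oi pa) pa⟩ : ItoGam G) = ⟨1, 1⟩
        rw [← lam_mul, inv_mul_cancel, lam_one, hinvl'] }
  have gmul : ∀ p q : ItoGam G, p * q = ⟨p.x * lam p.a q.x, o p.a q.a⟩ := fun _ _ => rfl
  have ginv : ∀ p : ItoGam G, p⁻¹ = ⟨lam (oi p.a) p.x⁻¹, oi p.a⟩ := fun _ => rfl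
  -- the two abelian "subgroups"
  have hito := ito_main (H := ItoGam G) (fun p => p.x = p.a) (fun p => p.x = 1)
    (by intro p hp
        rw [ginv]
        show lam (oi p.a) p.x⁻¹ = oi p.a
        rw [hp, lam_oi_inv])
    (by intro p hp
        rw [ginv]
        show lam (oi p.a) p.x⁻¹ = 1
        rw [hp, inv_one, lam_one])
    (by intro p q hp hq
        rw [gmul, gmul, ItoGam.mk.injEq]
        constructor
        · rw [hp, hq, ← o_lam, ← o_lam, hcomm]
        · exact hcomm _ _)
    (by intro p q hp hq
        rw [gmul, gmul, ItoGam.mk.injEq]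
        constructor
        · rw [hp, hq, lam_one, lam_one]
        · exact hcomm _ _)
    (by intro p
        refine ⟨⟨p.x, p.x⟩, ⟨1, o (oi p.x) p.a⟩, rfl, rfl, ?_⟩
        rw [gmul]
        show p = ⟨p.x * lam p.x 1, o p.x (o (oi p.x) p.a)⟩
        rw [lam_one, mul_one, ← hassoc, hinvr, he'])
  -- transfer back to G via the embedding w ↦ ⟨w, 1⟩
  intro w x y z
  have i_mul : ∀ u v : G, (⟨u, 1⟩ : ItoGam G) * ⟨v, 1⟩ = ⟨u * v, 1⟩ := by
    intro u v
    rw [gmul]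
    show (⟨u * lam 1 v, o 1 1⟩ : ItoGam G) = ⟨u * v, 1⟩
    rw [lam_one', he']
  have i_inv : ∀ u : G, (⟨u, 1⟩ : ItoGam G)⁻¹ = ⟨u⁻¹, 1⟩ := by
    intro u
    rw [ginv]
    show (⟨lam (oi 1) u⁻¹, oi 1⟩ : ItoGam G) = ⟨u⁻¹, 1⟩
    rw [oi_one, lam_one']
  have key := hito ⟨w, 1⟩ ⟨x, 1⟩ ⟨y, 1⟩ ⟨z, 1⟩
  simp only [i_inv, i_mul] at key
  exact congrArg ItoGam.x key

/-- Let `(G, ·, ∘)` be a skew left brace (here `gm` is the additive group structure `·`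
and `gc` the multiplicative one `∘`). If `(G, ∘)` is abelian, then `(G, ·)` is
metabelian: commutators of `(G, ·)` commute with each other, i.e. the derived subgroup
of `(G, ·)` is abelian. -/
theorem stmt_12 (G : Type*) (gm gc : Group G)
    (hbrace : ∀ a b c : G,
      gc.mul a (gm.mul b c) = gm.mul (gm.mul (gc.mul a b) (gm.inv a)) (gc.mul a c))
    (habel : ∀ a b : G, gc.mul a b = gc.mul b a) :
    ∀ a b c d : G,
      gm.mul
        (gm.mul (gm.mul (gm.mul (gm.inv a) (gm.inv b)) a) b)
        (gm.mul (gm.mul (gm.mul (gm.inv c) (gm.inv d)) c) d)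
      = gm.mul
          (gm.mul (gm.mul (gm.mul (gm.inv c) (gm.inv d)) c) d)
          (gm.mul (gm.mul (gm.mul (gm.inv a) (gm.inv b)) a) b) := by
  letI : Group G := gm
  intro a b c d
  have hb : ∀ a b c : G, gc.mul a (b * c) = gc.mul a b * a⁻¹ * gc.mul a c := hbrace
  have key := brace_master (G := G) gc.mul gc.inv gc.one
    (fun x y z => gc.mul_assoc x y z) (fun x => gc.one_mul x) (fun x => gc.inv_mul_cancel x)
    hb habel a⁻¹ b⁻¹ c⁻¹ d⁻¹
  simp only [inv_inv] at key
  show (a⁻¹ * b⁻¹ * a * b) * (c⁻¹ * d⁻¹ * c * d)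
      = (c⁻¹ * d⁻¹ * c * d) * (a⁻¹ * b⁻¹ * a * b)
  exact key
end

section
/- Let (G, ·, ∘) be a skew left brace such that (G, ·) is complete (trivial center and every automorphism is inner). Then there exists a Rota–Baxter operator B of weight 1 on (G, ·) such that x ∘ y = xB(x)yB(x)^{-1} for all x, y ∈ G. -/
/-- Let `(G, ·, ∘)` be a skew left brace such that `(G, ·)` is complete (trivial center
and every automorphism inner). Then there is a Rota–Baxter operator `B` of weight 1 on
`(G, ·)` with `x ∘ y = x * B x * y * (B x)⁻¹` for all `x y`. -/
theorem stmt_13 {G : Type*} [Group G]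
    (o : G → G → G) (oi : G → G) (oe : G)
    (hassoc : ∀ a b c : G, o (o a b) c = o a (o b c))
    (hid : ∀ a : G, o oe a = a ∧ o a oe = a)
    (hinv : ∀ a : G, o a (oi a) = oe ∧ o (oi a) a = oe)
    (hbrace : ∀ a b c : G, o a (b * c) = o a b * a⁻¹ * o a c)
    (hcenter : Subgroup.center G = ⊥)
    (hinner : ∀ φ : G ≃* G, ∃ g : G, ∀ x : G, φ x = g * x * g⁻¹) :
    ∃ B : G → G,
      (∀ g h : G, B g * B h = B (g * B g * h * (B g)⁻¹)) ∧
      (∀ x y : G, o x y = x * B x * y * (B x)⁻¹) := by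
  classical
  -- o a 1 = a
  have h1 : ∀ a : G, o a 1 = a := by
    intro a
    have h := hbrace a 1 1
    rw [mul_one] at h
    exact mul_inv_eq_one.mp (right_eq_mul.mp h)
  -- oe = 1
  have hoe : oe = 1 := (h1 oe).symm.trans (hid 1).1
  have hid1 : ∀ a : G, o 1 a = a := by
    intro a; have := (hid a).1; rwa [hoe] at this
  -- o a b⁻¹ = a * (o a b)⁻¹ * a
  have hinvb : ∀ a b : G, o a b⁻¹ = a * (o a b)⁻¹ * a := by
    intro a b
    have h := hbrace a b b⁻¹
    rw [mul_inv_cancel, h1] at h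
    apply mul_left_cancel (a := o a b * a⁻¹)
    rw [← h]
    group
  -- λ_a (λ_b x) = λ_{o a b} x
  have hcomp : ∀ a b x : G, a⁻¹ * o a (b⁻¹ * o b x) = (o a b)⁻¹ * o (o a b) x := by
    intro a b x
    rw [hbrace, hinvb, hassoc]
    group
  have hlamid : ∀ a x : G, a⁻¹ * o a ((oi a)⁻¹ * o (oi a) x) = x := by
    intro a x
    rw [hcomp, (hinv a).1, hoe, hid1, inv_one, one_mul]
  have hlamid' : ∀ a x : G, (oi a)⁻¹ * o (oi a) (a⁻¹ * o a x) = x := by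
    intro a x
    rw [hcomp, (hinv a).2, hoe, hid1, inv_one, one_mul]
  -- existence of conjugator
  have key : ∀ a : G, ∃ g : G, ∀ x : G, a⁻¹ * o a x = g * x * g⁻¹ := by
    intro a
    refine hinner
      { toFun := fun x => a⁻¹ * o a x
        invFun := fun x => (oi a)⁻¹ * o (oi a) x
        left_inv := fun x => hlamid' a x
        right_inv := fun x => hlamid a x
        map_mul' := by
          intro x y
          show a⁻¹ * o a (x * y) = (a⁻¹ * o a x) * (a⁻¹ * o a y)
          rw [hbrace]
          group }
  choose B hB using key
  -- uniqueness of conjugator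
  have huniq : ∀ u v : G, (∀ x : G, u * x * u⁻¹ = v * x * v⁻¹) → u = v := by
    intro u v h
    have hc : v⁻¹ * u ∈ Subgroup.center G := by
      rw [Subgroup.mem_center_iff]
      intro x
      have h2 : v⁻¹ * (u * x * u⁻¹) * u = v⁻¹ * (v * x * v⁻¹) * u := by rw [h x]
      group at h2 ⊢
      exact h2.symm
    rw [hcenter, Subgroup.mem_bot] at hc
    have : v * (v⁻¹ * u) = v * 1 := by rw [hc]
    group at this
    exact this
  refine ⟨B, ?_, ?_⟩
  · intro g h
    have hogh : g * B g * h * (B g)⁻¹ = o g h := by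
      calc g * B g * h * (B g)⁻¹ = g * (B g * h * (B g)⁻¹) := by group
        _ = g * (g⁻¹ * o g h) := by rw [← hB]
        _ = o g h := by group
    rw [hogh]
    apply huniq
    intro x
    have e1 := hB (o g h) x
    have e3 := hB h x
    have e4 : (o g h)⁻¹ * o (o g h) x = g⁻¹ * o g (h⁻¹ * o h x) := (hcomp g h x).symm
    rw [e1] at e4
    calc B g * B h * x * (B g * B h)⁻¹
        = B g * (B h * x * (B h)⁻¹) * (B g)⁻¹ := by group
      _ = g⁻¹ * o g (B h * x * (B h)⁻¹) := (hB g _).symm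
      _ = g⁻¹ * o g (h⁻¹ * o h x) := by rw [← e3]
      _ = B (o g h) * x * (B (o g h))⁻¹ := e4.symm
  · intro x y
    calc o x y = x * (x⁻¹ * o x y) := by group
      _ = x * (B x * y * (B x)⁻¹) := by rw [hB]
      _ = x * B x * y * (B x)⁻¹ := by group
end

section
/- Let G(B) = (G, ·, ∘_B) be the skew left brace obtained from a Rota–Baxter group (G, ·, B). Then the socle Soc(G(B)) = {a ∈ G | a ∈ Z(G,·) and B(a) ∈ Z(G,·)} = Z(G,·) ∩ B^{-1}(Z(G,·)). -/
/-- For the skew left brace `G(B)` obtained from a Rota–Baxter group `(G, ·, B)` via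
`x ∘_B y = x * B x * y * (B x)⁻¹`, the socle
`Soc(G(B)) = {a | a ∈ Z(G,·) ∧ ∀ b, a ∘_B b = a * b}` equals
`{a | a ∈ Z(G,·) ∧ B a ∈ Z(G,·)} = Z(G,·) ∩ B⁻¹(Z(G,·))`. -/
theorem stmt_16 {G : Type*} [Group G] (B : G → G)
    (hB : ∀ g h : G, B g * B h = B (g * B g * h * (B g)⁻¹)) :
    {a : G | a ∈ Subgroup.center G ∧ ∀ b : G, a * B a * b * (B a)⁻¹ = a * b}
      = {a : G | a ∈ Subgroup.center G ∧ B a ∈ Subgroup.center G} := by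
  ext a
  simp only [Set.mem_setOf_eq, and_congr_right_iff, Subgroup.mem_center_iff]
  intro _
  constructor
  · intro h b
    have h1 := h b
    have h2 : B a * b * (B a)⁻¹ = b := by
      have h3 : a * (B a * b * (B a)⁻¹) = a * b := by rw [← h1]; group
      exact mul_left_cancel h3
    calc b * B a = B a * b * (B a)⁻¹ * B a := by rw [h2]
    _ = B a * b := by group
  · intro h b
    have : B a * b = b * B a := (h b).symm
    calc a * B a * b * (B a)⁻¹ = a * (B a * b) * (B a)⁻¹ := by group
    _ = a * (b * B a) * (B a)⁻¹ := by rw [this]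
    _ = a * b := by group
end

section
/- Let (G, ·, B) be a Rota–Baxter group and set λ_a(b) = B(a)bB(a)^{-1}. Then the map S: G × G → G × G given by S(a, b) = (λ_a(b), a^{λ_a(b)B(λ_a(b))}) (where x^g = g^{-1}xg) is a non-degenerate set-theoretical solution to the Yang–Baxter equation, i.e. S is bijective with bijective component maps and (S × id)(id × S)(S × id) = (id × S)(S × id)(id × S). Moreover, S is involutive (S² = id) if and only if G is abelian. -/
/-- The map `S(a,b) = (λ_a(b), a^{λ_a(b) * B(λ_a(b))})` associated with a map
`B : G → G`, where `λ_a(b) = B a * b * (B a)⁻¹` and `x^g = g⁻¹ * x * g`. -/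
def rbYB {G : Type*} [Group G] (B : G → G) : G × G → G × G :=
  fun p =>
    (B p.1 * p.2 * (B p.1)⁻¹,
     ((B p.1 * p.2 * (B p.1)⁻¹) * B (B p.1 * p.2 * (B p.1)⁻¹))⁻¹ * p.1 *
       ((B p.1 * p.2 * (B p.1)⁻¹) * B (B p.1 * p.2 * (B p.1)⁻¹)))

/-- `S × id` on `G × G × G`. -/
def rbYB₁₂ {G : Type*} [Group G] (B : G → G) : G × G × G → G × G × G :=
  fun t => ((rbYB B (t.1, t.2.1)).1, (rbYB B (t.1, t.2.1)).2, t.2.2)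

/-- `id × S` on `G × G × G`. -/
def rbYB₂₃ {G : Type*} [Group G] (B : G → G) : G × G × G → G × G × G :=
  fun t => (t.1, rbYB B (t.2.1, t.2.2))

section RBAux

variable {G : Type*} [Group G] (B : G → G)

/-- `rbYB` applied to a pair, in terms of abbreviations. -/
lemma rbYB_eq (a b u v : G) (hu : u = B a * b * (B a)⁻¹)
    (hv : v = (u * B u)⁻¹ * a * (u * B u)) : rbYB B (a, b) = (u, v) := by
  subst hv; subst hu; rfl

variable (hB : ∀ g h : G, B g * B h = B (g * B g * h * (B g)⁻¹))
include hB

lemma rb_B_one : B 1 = 1 := by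
  have h := hB 1 1
  have e : (1 : G) * B 1 * 1 * (B 1)⁻¹ = 1 := by group
  rw [e] at h
  exact mul_left_cancel (h.trans (mul_one _).symm)

lemma rb_B_inv (u : G) : B ((B u)⁻¹ * u⁻¹ * B u) = (B u)⁻¹ := by
  have h2 := hB u ((B u)⁻¹ * u⁻¹ * B u)
  have h3 : u * B u * ((B u)⁻¹ * u⁻¹ * B u) * (B u)⁻¹ = 1 := by group
  rw [h3, rb_B_one B hB] at h2
  exact (inv_eq_of_mul_eq_one_right h2).symm

/-- `B` of the second component of `rbYB`. -/
lemma rb_B_snd (a x u : G) (hu : u = B a * x * (B a)⁻¹) :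
    B ((u * B u)⁻¹ * a * (u * B u)) = (B u)⁻¹ * (B a * B x) := by
  have hI := rb_B_inv B hB u
  have h1 : (u * B u)⁻¹ * a * (u * B u) =
      ((B u)⁻¹ * u⁻¹ * B u) * B ((B u)⁻¹ * u⁻¹ * B u) * (a * B a * x * (B a)⁻¹) *
        (B ((B u)⁻¹ * u⁻¹ * B u))⁻¹ := by
    rw [hI, hu]; group
  rw [h1, ← hB ((B u)⁻¹ * u⁻¹ * B u) (a * B a * x * (B a)⁻¹), ← hB a x, hI]

end RBAux

private lemma rb_conj2 {G : Type*} [Group G] (a x y z w : G) (h : x * y = z * w) :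
    y⁻¹ * (x⁻¹ * a * x) * y = w⁻¹ * (z⁻¹ * a * z) * w := by
  have h1 : y⁻¹ * (x⁻¹ * a * x) * y = (x * y)⁻¹ * a * (x * y) := by group
  have h2 : w⁻¹ * (z⁻¹ * a * z) * w = (z * w)⁻¹ * a * (z * w) := by group
  rw [h1, h2, h]

/-- Let `(G, ·, B)` be a Rota–Baxter group and `λ_a(b) = B a * b * (B a)⁻¹`. Then
`S(a, b) = (λ_a(b), a^{λ_a(b) * B(λ_a(b))})` is a non-degenerate set-theoretical
solution to the Yang–Baxter equation; moreover `S` is involutive iff `G` is abelian. -/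
theorem stmt_19 {G : Type*} [Group G] (B : G → G)
    (hB : ∀ g h : G, B g * B h = B (g * B g * h * (B g)⁻¹)) :
    Function.Bijective (rbYB B) ∧
    (∀ a : G, Function.Bijective (fun b : G => (rbYB B (a, b)).1)) ∧
    (∀ b : G, Function.Bijective (fun a : G => (rbYB B (a, b)).2)) ∧
    (rbYB₁₂ B ∘ rbYB₂₃ B ∘ rbYB₁₂ B = rbYB₂₃ B ∘ rbYB₁₂ B ∘ rbYB₂₃ B) ∧
    ((rbYB B ∘ rbYB B = id) ↔ ∀ a b : G, a * b = b * a) := by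
  refine ⟨?_, ?_, ?_, ?_, ?_⟩
  · -- Bijectivity of S
    rw [Function.bijective_iff_has_inverse]
    refine ⟨fun q => (q.1 * B q.1 * q.2 * (B q.1)⁻¹ * q.1⁻¹,
        (B (q.1 * B q.1 * q.2 * (B q.1)⁻¹ * q.1⁻¹))⁻¹ * q.1 *
          B (q.1 * B q.1 * q.2 * (B q.1)⁻¹ * q.1⁻¹)), ?_, ?_⟩
    · rintro ⟨a, b⟩
      obtain ⟨u, hu⟩ : ∃ x, x = B a * b * (B a)⁻¹ := ⟨_, rfl⟩
      obtain ⟨v, hv⟩ : ∃ x, x = (u * B u)⁻¹ * a * (u * B u) := ⟨_, rfl⟩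
      rw [rbYB_eq B a b u v hu hv]
      show (u * B u * v * (B u)⁻¹ * u⁻¹,
        (B (u * B u * v * (B u)⁻¹ * u⁻¹))⁻¹ * u * B (u * B u * v * (B u)⁻¹ * u⁻¹)) = (a, b)
      have h1 : u * B u * v * (B u)⁻¹ * u⁻¹ = a := by rw [hv]; group
      rw [h1]
      have h2 : (B a)⁻¹ * u * B a = b := by rw [hu]; group
      rw [h2]
    · rintro ⟨u, v⟩
      have key : ∀ a : G, a = u * B u * v * (B u)⁻¹ * u⁻¹ →
          rbYB B (a, (B a)⁻¹ * u * B a) = (u, v) := by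
        intro a ha
        obtain ⟨w, hw⟩ : ∃ x, x = B a * ((B a)⁻¹ * u * B a) * (B a)⁻¹ := ⟨_, rfl⟩
        obtain ⟨v', hv'⟩ : ∃ x, x = (w * B w)⁻¹ * a * (w * B w) := ⟨_, rfl⟩
        rw [rbYB_eq B a ((B a)⁻¹ * u * B a) w v' hw hv']
        have hwu : w = u := by rw [hw]; group
        have hv'' : v' = v := by rw [hv', hwu, ha]; group
        rw [hwu, hv'']
      exact key _ rfl
  · -- σ_a bijective
    intro a
    refine Function.bijective_iff_has_inverse.mpr ⟨fun y => (B a)⁻¹ * y * B a, ?_, ?_⟩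
    · intro x
      show (B a)⁻¹ * (B a * x * (B a)⁻¹) * B a = x
      group
    · intro y
      show B a * ((B a)⁻¹ * y * B a) * (B a)⁻¹ = y
      group
  · -- τ_b bijective
    intro b
    constructor
    · -- injective
      intro a1 a2 hh
      have h : (rbYB B (a1, b)).2 = (rbYB B (a2, b)).2 := hh
      obtain ⟨u1, hu1⟩ : ∃ x, x = B a1 * b * (B a1)⁻¹ := ⟨_, rfl⟩
      obtain ⟨u2, hu2⟩ : ∃ x, x = B a2 * b * (B a2)⁻¹ := ⟨_, rfl⟩
      obtain ⟨y1, hy1⟩ : ∃ x, x = B u1 := ⟨_, rfl⟩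
      obtain ⟨y2, hy2⟩ : ∃ x, x = B u2 := ⟨_, rfl⟩
      have h1 : (rbYB B (a1, b)).2 = (u1 * y1)⁻¹ * a1 * (u1 * y1) := by
        rw [hy1]
        show ((B a1 * b * (B a1)⁻¹) * B (B a1 * b * (B a1)⁻¹))⁻¹ * a1 *
          ((B a1 * b * (B a1)⁻¹) * B (B a1 * b * (B a1)⁻¹)) = (u1 * B u1)⁻¹ * a1 * (u1 * B u1)
        rw [← hu1]
      have h2 : (rbYB B (a2, b)).2 = (u2 * y2)⁻¹ * a2 * (u2 * y2) := by
        rw [hy2]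
        show ((B a2 * b * (B a2)⁻¹) * B (B a2 * b * (B a2)⁻¹))⁻¹ * a2 *
          ((B a2 * b * (B a2)⁻¹) * B (B a2 * b * (B a2)⁻¹)) = (u2 * B u2)⁻¹ * a2 * (u2 * B u2)
        rw [← hu2]
      rw [h1, h2] at h
      have f1 : B ((u1 * y1)⁻¹ * a1 * (u1 * y1)) = y1⁻¹ * (B a1 * B b) := by
        rw [hy1]; exact rb_B_snd B hB a1 b u1 hu1
      have f2 : B ((u2 * y2)⁻¹ * a2 * (u2 * y2)) = y2⁻¹ * (B a2 * B b) := by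
        rw [hy2]; exact rb_B_snd B hB a2 b u2 hu2
      have hBv := congrArg B h
      rw [f1, f2, ← mul_assoc, ← mul_assoc] at hBv
      have hk : y1⁻¹ * B a1 = y2⁻¹ * B a2 := mul_right_cancel hBv
      have hBa1 : B a1 = y1 * (y2⁻¹ * B a2) := by rw [← hk]; group
      have hI : y1⁻¹ * u1⁻¹ * y1 = y2⁻¹ * u2⁻¹ * y2 := by
        rw [hu1, hu2, hBa1]; group
      have hIB1 : B (y1⁻¹ * u1⁻¹ * y1) = y1⁻¹ := by rw [hy1]; exact rb_B_inv B hB u1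
      have hIB2 : B (y2⁻¹ * u2⁻¹ * y2) = y2⁻¹ := by rw [hy2]; exact rb_B_inv B hB u2
      have hueq : u1 = u2 := by
        calc u1 = (B (y1⁻¹ * u1⁻¹ * y1))⁻¹ * (y1⁻¹ * u1⁻¹ * y1)⁻¹ * B (y1⁻¹ * u1⁻¹ * y1) := by
              rw [hIB1]; group
          _ = (B (y2⁻¹ * u2⁻¹ * y2))⁻¹ * (y2⁻¹ * u2⁻¹ * y2)⁻¹ * B (y2⁻¹ * u2⁻¹ * y2) := by
              rw [hI]
          _ = u2 := by rw [hIB2]; group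
      have hyeq : y1 = y2 := by rw [hy1, hy2, hueq]
      rw [hueq, hyeq] at h
      exact mul_left_cancel (mul_right_cancel h)
    · -- surjective
      intro v
      obtain ⟨w, hw⟩ : ∃ x, x = B v * (B b)⁻¹ * b * B b * (B v)⁻¹ := ⟨_, rfl⟩
      obtain ⟨z, hz⟩ : ∃ x, x = B w⁻¹ := ⟨_, rfl⟩
      obtain ⟨u, hu⟩ : ∃ x, x = z⁻¹ * w * z := ⟨_, rfl⟩
      obtain ⟨g, hg⟩ : ∃ x, x = u * B u * v * (B u)⁻¹ := ⟨_, rfl⟩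
      refine ⟨g * B g * ((B b)⁻¹ * b⁻¹ * B b) * (B g)⁻¹, ?_⟩
      show (rbYB B (g * B g * ((B b)⁻¹ * b⁻¹ * B b) * (B g)⁻¹, b)).2 = v
      obtain ⟨A, hA⟩ : ∃ x, x = g * B g * ((B b)⁻¹ * b⁻¹ * B b) * (B g)⁻¹ := ⟨_, rfl⟩
      rw [← hA]
      have hBu : B u = z⁻¹ := by
        rw [hu, hz]
        have h0 := rb_B_inv B hB w⁻¹
        rwa [inv_inv] at h0
      have hBg : B g = B u * B v := by rw [hg]; exact (hB u v).symm
      have hBA : B A = B u * B v * (B b)⁻¹ := by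
        rw [hA]
        have h1 := hB g ((B b)⁻¹ * b⁻¹ * B b)
        rw [rb_B_inv B hB b] at h1
        rw [← h1, hBg]
      have key : B A * b * (B A)⁻¹ = u := by
        rw [hBA, hBu, hu, hw]; group
      show ((B A * b * (B A)⁻¹) * B (B A * b * (B A)⁻¹))⁻¹ * A *
        ((B A * b * (B A)⁻¹) * B (B A * b * (B A)⁻¹)) = v
      rw [key, hA, hBg, hg, hBu, hu, hw]
      group
  · -- Yang–Baxter equation
    funext t
    obtain ⟨a, b, c⟩ := t
    show rbYB₁₂ B (rbYB₂₃ B (rbYB₁₂ B (a, b, c))) = rbYB₂₃ B (rbYB₁₂ B (rbYB₂₃ B (a, b, c)))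
    obtain ⟨u1, hu1⟩ : ∃ x, x = B a * b * (B a)⁻¹ := ⟨_, rfl⟩
    obtain ⟨v1, hv1⟩ : ∃ x, x = (u1 * B u1)⁻¹ * a * (u1 * B u1) := ⟨_, rfl⟩
    obtain ⟨u2, hu2⟩ : ∃ x, x = B v1 * c * (B v1)⁻¹ := ⟨_, rfl⟩
    obtain ⟨v2, hv2⟩ : ∃ x, x = (u2 * B u2)⁻¹ * v1 * (u2 * B u2) := ⟨_, rfl⟩
    obtain ⟨u3, hu3⟩ : ∃ x, x = B u1 * u2 * (B u1)⁻¹ := ⟨_, rfl⟩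
    obtain ⟨v3, hv3⟩ : ∃ x, x = (u3 * B u3)⁻¹ * u1 * (u3 * B u3) := ⟨_, rfl⟩
    obtain ⟨p1, hp1⟩ : ∃ x, x = B b * c * (B b)⁻¹ := ⟨_, rfl⟩
    obtain ⟨q1, hq1⟩ : ∃ x, x = (p1 * B p1)⁻¹ * b * (p1 * B p1) := ⟨_, rfl⟩
    obtain ⟨p2, hp2⟩ : ∃ x, x = B a * p1 * (B a)⁻¹ := ⟨_, rfl⟩
    obtain ⟨q2, hq2⟩ : ∃ x, x = (p2 * B p2)⁻¹ * a * (p2 * B p2) := ⟨_, rfl⟩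
    obtain ⟨p3, hp3⟩ : ∃ x, x = B q2 * q1 * (B q2)⁻¹ := ⟨_, rfl⟩
    obtain ⟨q3, hq3⟩ : ∃ x, x = (p3 * B p3)⁻¹ * q2 * (p3 * B p3) := ⟨_, rfl⟩
    have f1 : B v1 = (B u1)⁻¹ * (B a * B b) := by
      rw [hv1]; exact rb_B_snd B hB a b u1 hu1
    have f2 : B q1 = (B p1)⁻¹ * (B b * B c) := by
      rw [hq1]; exact rb_B_snd B hB b c p1 hp1
    have f3 : B q2 = (B p2)⁻¹ * (B a * B p1) := by
      rw [hq2]; exact rb_B_snd B hB a p1 p2 hp2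
    have s1 : rbYB₁₂ B (a, b, c) = (u1, v1, c) := by
      show ((rbYB B (a, b)).1, (rbYB B (a, b)).2, c) = (u1, v1, c)
      rw [rbYB_eq B a b u1 v1 hu1 hv1]
    have s2 : rbYB₂₃ B (u1, v1, c) = (u1, u2, v2) := by
      show (u1, rbYB B (v1, c)) = (u1, u2, v2)
      rw [rbYB_eq B v1 c u2 v2 hu2 hv2]
    have s3 : rbYB₁₂ B (u1, u2, v2) = (u3, v3, v2) := by
      show ((rbYB B (u1, u2)).1, (rbYB B (u1, u2)).2, v2) = (u3, v3, v2)
      rw [rbYB_eq B u1 u2 u3 v3 hu3 hv3]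
    have t1 : rbYB₂₃ B (a, b, c) = (a, p1, q1) := by
      show (a, rbYB B (b, c)) = (a, p1, q1)
      rw [rbYB_eq B b c p1 q1 hp1 hq1]
    have t2 : rbYB₁₂ B (a, p1, q1) = (p2, q2, q1) := by
      show ((rbYB B (a, p1)).1, (rbYB B (a, p1)).2, q1) = (p2, q2, q1)
      rw [rbYB_eq B a p1 p2 q2 hp2 hq2]
    have t3 : rbYB₂₃ B (p2, q2, q1) = (p2, p3, q3) := by
      show (p2, rbYB B (q2, q1)) = (p2, p3, q3)
      rw [rbYB_eq B q2 q1 p3 q3 hp3 hq3]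
    rw [s1, s2, s3, t1, t2, t3]
    have G1 : u3 = p2 := by
      rw [hu3, hu2, f1, hp2, hp1]; group
    have G2 : v3 = p3 := by
      rw [hv3, G1, hp3, f3, hq1, hu1, hp2, hp1]; group
    have e1 : B (u1 * B u1 * u2 * (B u1)⁻¹) = B u1 * B u2 := (hB u1 u2).symm
    have e2 : B (p2 * B p2 * p3 * (B p2)⁻¹) = B p2 * B p3 := (hB p2 p3).symm
    have hA : u1 * B u1 * u2 * (B u1)⁻¹ = p2 * B p2 * p3 * (B p2)⁻¹ := by
      rw [hu2, f1, hp3, f3, hq1, hu1, hp2, hp1]; group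
    have hK : (u1 * B u1) * (u2 * B u2) = (p2 * B p2) * (p3 * B p3) := by
      calc (u1 * B u1) * (u2 * B u2)
          = (u1 * B u1 * u2 * (B u1)⁻¹) * B (u1 * B u1 * u2 * (B u1)⁻¹) := by
            rw [e1]; group
        _ = (p2 * B p2 * p3 * (B p2)⁻¹) * B (p2 * B p2 * p3 * (B p2)⁻¹) := by rw [hA]
        _ = (p2 * B p2) * (p3 * B p3) := by rw [e2]; group
    have G3 : v2 = q3 := by
      rw [hv2, hv1, hq3, hq2]
      exact rb_conj2 a _ _ _ _ hK
    rw [G1, G2, G3]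
  · -- involutive iff abelian
    constructor
    · intro hid a b
      have key : ∀ x y : G, (B x * y * (B x)⁻¹)⁻¹ * x * (B x * y * (B x)⁻¹) = x := by
        intro x y
        obtain ⟨u, hu⟩ : ∃ t, t = B x * y * (B x)⁻¹ := ⟨_, rfl⟩
        obtain ⟨v, hv⟩ : ∃ t, t = (u * B u)⁻¹ * x * (u * B u) := ⟨_, rfl⟩
        have h0 : rbYB B (rbYB B (x, y)) = (x, y) := congrFun hid (x, y)
        rw [rbYB_eq B x y u v hu hv] at h0
        obtain ⟨u', hu'⟩ : ∃ t, t = B u * v * (B u)⁻¹ := ⟨_, rfl⟩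
        obtain ⟨v', hv'⟩ : ∃ t, t = (u' * B u')⁻¹ * u * (u' * B u') := ⟨_, rfl⟩
        rw [rbYB_eq B u v u' v' hu' hv'] at h0
        have hfst : u' = x := congrArg Prod.fst h0
        have e : u' = u⁻¹ * x * u := by rw [hu', hv]; group
        have e2 : u⁻¹ * x * u = x := e.symm.trans hfst
        rw [hu] at e2
        exact e2
      have k := key a ((B a)⁻¹ * b * B a)
      rw [show B a * ((B a)⁻¹ * b * B a) * (B a)⁻¹ = b from by group] at k
      calc a * b = b * (b⁻¹ * a * b) := by group
        _ = b * a := by rw [k]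
    · intro hc
      have swap : ∀ s t : G, rbYB B (s, t) = (t, s) := by
        intro s t
        obtain ⟨u, hu⟩ : ∃ r, r = B s * t * (B s)⁻¹ := ⟨_, rfl⟩
        obtain ⟨v, hv⟩ : ∃ r, r = (u * B u)⁻¹ * s * (u * B u) := ⟨_, rfl⟩
        rw [rbYB_eq B s t u v hu hv]
        have h1 : u = t := by rw [hu, hc (B s) t]; group
        have h2 : v = s := by
          rw [hv]
          calc (u * B u)⁻¹ * s * (u * B u) = (u * B u)⁻¹ * (s * (u * B u)) := by group
            _ = (u * B u)⁻¹ * ((u * B u) * s) := by rw [hc s (u * B u)]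
            _ = s := by group
        rw [h1, h2]
      funext p
      obtain ⟨x, y⟩ := p
      show rbYB B (rbYB B (x, y)) = (x, y)
      rw [swap, swap]
end
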